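/- The Y-Delta transformation preserves the response matrix: Let (G,c) be a network with node set N and internal vertices I, and suppose v₀ ∈ I has exactly three neighbors, the distinct vertices v₁, v₂, v₃, joined to v₀ by edges of conductances c₁, c₂, c₃ > 0. Let (G',c') be the network on vertex set V∖{v₀} obtained by deleting v₀ and its edges and, for each pair {i,j} ⊆ {1,2,3}, increasing the conductance between v_i and v_j by c_i c_j/(c₁+c₂+c₃) (adding the edge v_i v_j if it was not present). Then G' is connected, and the response matrix of (G',c') with node set N equals the response matrix of (G,c) with node set N. -/

import Mathlib

open Matrix BigOperators

/-- The Laplacian of a network given by a symmetric conductance function `c`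
(zero on the diagonal and on non-edges): `Δ v v' = -c v v'` off the diagonal
and `Δ v v = ∑_{v'} c v v'` on the diagonal. -/
noncomputable def netLap {V : Type*} [Fintype V] [DecidableEq V] (c : V → V → ℝ) :
    Matrix V V ℝ :=
  Matrix.of fun v w => if v = w then ∑ u, c v u else -c v w

/-- The response matrix `L = -A + B C⁻¹ Bᵀ` of a network with node set `N`. -/
noncomputable def respMat {V : Type*} [Fintype V] [DecidableEq V]
    (c : V → V → ℝ) (N : Finset V) : Matrix {v : V // v ∈ N} {v : V // v ∈ N} ℝ :=
  -(netLap c).submatrix (Subtype.val : {v : V // v ∈ N} → V)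
      (Subtype.val : {v : V // v ∈ N} → V)
    + (netLap c).submatrix (Subtype.val : {v : V // v ∈ N} → V)
        (Subtype.val : {v : V // v ∉ N} → V)
      * ((netLap c).submatrix (Subtype.val : {v : V // v ∉ N} → V)
          (Subtype.val : {v : V // v ∉ N} → V))⁻¹
      * ((netLap c).submatrix (Subtype.val : {v : V // v ∈ N} → V)
          (Subtype.val : {v : V // v ∉ N} → V))ᵀ

/-!
The response matrix applied to boundary data `f` is minus the boundary current of the harmonic
extension of `f`; this extension exists and is unique because the Dirichlet Laplacian of a
connected network is invertible (a potential vanishing on `N` with zero energy is constant).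
Eliminating the internal vertex `v₀` by the star-mesh transformation, of which Y-Δ is the
degree-three case, is a Schur complement step on the Laplacian: a potential that is harmonic at
`v₀` keeps all its other currents after `v₀` is removed. So the harmonic extensions of the two
networks agree off `v₀`, and so do their boundary currents.
-/

open Finset

theorem SimpleGraph.Reachable.map_of_adj {V W : Type*} {G : SimpleGraph V} {G' : SimpleGraph W}
    (f : V → W) (h : ∀ a b, G.Adj a b → G'.Reachable (f a) (f b)) {a b : V}
    (hab : G.Reachable a b) : G'.Reachable (f a) (f b) := by
  rw [SimpleGraph.reachable_iff_reflTransGen] at hab ⊢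
  exact hab.lift' f fun a b hab => (SimpleGraph.reachable_iff_reflTransGen _ _).1 (h a b hab)

theorem SimpleGraph.Connected.eq_of_forall_adj {V W : Type*} {G : SimpleGraph V}
    (hG : G.Connected) {f : V → W} (h : ∀ a b, G.Adj a b → f a = f b) (a b : V) : f a = f b :=
  SimpleGraph.reachable_bot.1 <|
    (hG.preconnected a b).map_of_adj f fun a b hab => SimpleGraph.reachable_bot.2 (h a b hab)

theorem Matrix.submatrix_mulVec_add_submatrix_compl_mulVec {l m V : Type*} [Fintype V]
    [DecidableEq V] (M : Matrix m V ℝ) (r : l → m) (N : Finset V) (w : V → ℝ) :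
    M.submatrix r (Subtype.val : {v // v ∈ N} → V) *ᵥ (fun x => w x)
      + M.submatrix r (Subtype.val : {v // v ∉ N} → V) *ᵥ (fun x => w x)
      = fun i => (M *ᵥ w) (r i) := by
  ext i
  simp only [Pi.add_apply, mulVec, dotProduct, submatrix_apply]
  convert Fintype.sum_subtype_add_sum_subtype (· ∈ N) fun v => M (r i) v * w v

theorem Fintype.sum_eq_three_of_support_subset {V : Type*} [Fintype V] [DecidableEq V]
    {f : V → ℝ} {v₁ v₂ v₃ : V} (h12 : v₁ ≠ v₂) (h13 : v₁ ≠ v₃) (h23 : v₂ ≠ v₃)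
    (hf : ∀ u, f u ≠ 0 → u = v₁ ∨ u = v₂ ∨ u = v₃) : ∑ u, f u = f v₁ + f v₂ + f v₃ := by
  rw [← Finset.sum_subset (subset_univ {v₁, v₂, v₃})
      fun u _ hu => by_contra fun h => hu (by simpa using hf u h),
    sum_insert (by simp [h12, h13]), sum_pair h23, add_assoc]

section Network

variable {V : Type*} [Fintype V] [DecidableEq V] {c : V → V → ℝ}

theorem netLap_transpose (hsymm : ∀ v w, c v w = c w v) : (netLap c)ᵀ = netLap c := by
  ext v w
  simp only [transpose_apply, netLap, of_apply]
  split_ifs with h₁ h₂ h₂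
  · rw [h₁]
  · exact absurd h₁.symm h₂
  · exact absurd h₂.symm h₁
  · rw [hsymm]

theorem netLap_mulVec_apply (hdiag : ∀ v, c v v = 0) (w : V → ℝ) (v : V) :
    (netLap c *ᵥ w) v = ∑ u, c v u * (w v - w u) := by
  have hterm : ∀ u, netLap c v u * w u
      = (if v = u then (∑ u, c v u) * w u else 0) - c v u * w u := by
    intro u
    by_cases h : v = u
    · subst h; simp [netLap, hdiag]
    · simp [netLap, h]
  simp only [mulVec, dotProduct, hterm, sum_sub_distrib, sum_ite_eq, mem_univ, if_true, sum_mul,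
    mul_sub]

theorem two_mul_dotProduct_netLap_mulVec (hsymm : ∀ v w, c v w = c w v)
    (hdiag : ∀ v, c v v = 0) (w : V → ℝ) :
    2 * (w ⬝ᵥ (netLap c *ᵥ w)) = ∑ v, ∑ u, c v u * (w v - w u) ^ 2 := by
  have hswap : ∑ v, ∑ u, c v u * (w v - w u) * w v = ∑ v, ∑ u, c v u * (w u - w v) * w u := by
    rw [sum_comm]; simp only [hsymm]
  have hform : w ⬝ᵥ (netLap c *ᵥ w) = ∑ v, ∑ u, c v u * (w v - w u) * w v := by
    simp only [dotProduct, netLap_mulVec_apply hdiag, mul_sum]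
    exact sum_congr rfl fun v _ => sum_congr rfl fun u _ => by ring
  rw [two_mul, hform]
  nth_rewrite 2 [hswap]
  rw [← sum_add_distrib]
  exact sum_congr rfl fun v _ => by rw [← sum_add_distrib]; exact sum_congr rfl fun u _ => by ring

theorem eq_of_dotProduct_netLap_mulVec_eq_zero (hsymm : ∀ v w, c v w = c w v)
    (hnonneg : ∀ v w, 0 ≤ c v w) (hdiag : ∀ v, c v v = 0) {w : V → ℝ}
    (hw : w ⬝ᵥ (netLap c *ᵥ w) = 0) {v u : V} (hvu : c v u ≠ 0) : w v = w u := by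
  have hterm : ∀ v u, 0 ≤ c v u * (w v - w u) ^ 2 := fun v u => by
    have := hnonneg v u; positivity
  have hsum : ∑ v, ∑ u, c v u * (w v - w u) ^ 2 = 0 := by
    rw [← two_mul_dotProduct_netLap_mulVec hsymm hdiag, hw, mul_zero]
  have hvu0 : c v u * (w v - w u) ^ 2 = 0 :=
    (sum_eq_zero_iff_of_nonneg fun u _ => hterm v u).1
      ((sum_eq_zero_iff_of_nonneg fun v _ => sum_nonneg fun u _ => hterm v u).1 hsum v
        (mem_univ v)) u (mem_univ u)
  simpa [hvu, sub_eq_zero] using hvu0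

variable (c) in
def IsHarmonicOff (N : Finset V) (w : V → ℝ) : Prop :=
  ∀ v ∉ N, (netLap c *ᵥ w) v = 0

theorem isHarmonicOff_iff {N : Finset V} {w : V → ℝ} :
    IsHarmonicOff c N w ↔
      (netLap c).submatrix (Subtype.val : {v // v ∉ N} → V) (Subtype.val : {v // v ∈ N} → V)
          *ᵥ (fun i : {v // v ∈ N} => w i)
        + (netLap c).submatrix (Subtype.val : {v // v ∉ N} → V) Subtype.val
          *ᵥ (fun i : {v // v ∉ N} => w i)
        = 0 := by
  rw [(netLap c).submatrix_mulVec_add_submatrix_compl_mulVec, funext_iff]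
  exact ⟨fun h i => h i i.2, fun h v hv => h ⟨v, hv⟩⟩

theorem isUnit_det_dirichletLap (hsymm : ∀ v w, c v w = c w v) (hnonneg : ∀ v w, 0 ≤ c v w)
    (hdiag : ∀ v, c v v = 0) (hconn : (SimpleGraph.fromRel fun v w : V => c v w ≠ 0).Connected)
    {N : Finset V} (hN : N.Nonempty) :
    IsUnit ((netLap c).submatrix (Subtype.val : {v : V // v ∉ N} → V)
      (Subtype.val : {v : V // v ∉ N} → V)).det := by
  rw [isUnit_iff_ne_zero, Ne, ← exists_mulVec_eq_zero_iff]
  rintro ⟨x, hx0, hx⟩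
  set w : V → ℝ := fun v => if h : v ∈ N then 0 else x ⟨v, h⟩
  have hwN : (fun i : {v // v ∈ N} => w i) = 0 := funext fun i => dif_pos i.2
  have hwI : (fun i : {v // v ∉ N} => w i) = x := funext fun i => dif_neg i.2
  have hharm : IsHarmonicOff c N w := by
    rw [isHarmonicOff_iff, hwN, hwI, hx, mulVec_zero, add_zero]
  have henergy : w ⬝ᵥ (netLap c *ᵥ w) = 0 := sum_eq_zero fun v _ => by
    by_cases hv : v ∈ N
    · simp [w, hv]
    · rw [hharm v hv, mul_zero]
  have hconst : ∀ a b, w a = w b := hconn.eq_of_forall_adj fun a b hab => by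
    obtain ⟨-, hab | hba⟩ := (SimpleGraph.fromRel_adj _ a b).1 hab
    · exact eq_of_dotProduct_netLap_mulVec_eq_zero hsymm hnonneg hdiag henergy hab
    · exact (eq_of_dotProduct_netLap_mulVec_eq_zero hsymm hnonneg hdiag henergy hba).symm
  obtain ⟨n, hn⟩ := hN
  refine hx0 (hwI ▸ funext fun i => ?_)
  rw [hconst i n, Pi.zero_apply]
  exact congrFun hwN ⟨n, hn⟩

theorem exists_isHarmonicOff_extension {N : Finset V}
    (hC : IsUnit ((netLap c).submatrix (Subtype.val : {v : V // v ∉ N} → V)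
      (Subtype.val : {v : V // v ∉ N} → V)).det) (f : {v // v ∈ N} → ℝ) :
    ∃ w : V → ℝ, (fun i : {v // v ∈ N} => w i) = f ∧ IsHarmonicOff c N w := by
  set C := (netLap c).submatrix (Subtype.val : {v : V // v ∉ N} → V) Subtype.val
  set u := -(C⁻¹ *ᵥ ((netLap c).submatrix Subtype.val Subtype.val *ᵥ f))
  set w : V → ℝ := fun v => if h : v ∈ N then f ⟨v, h⟩ else u ⟨v, h⟩
  have hwN : (fun i : {v // v ∈ N} => w i) = f := funext fun i => dif_pos i.2
  have hwI : (fun i : {v // v ∉ N} => w i) = u := funext fun i => dif_neg i.2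
  refine ⟨w, hwN, ?_⟩
  rw [isHarmonicOff_iff, hwN, hwI, mulVec_neg, mulVec_mulVec, mul_nonsing_inv _ hC, one_mulVec,
    add_neg_cancel]

theorem respMat_mulVec_of_isHarmonicOff (hsymm : ∀ v w, c v w = c w v) {N : Finset V}
    (hC : IsUnit ((netLap c).submatrix (Subtype.val : {v : V // v ∉ N} → V)
      (Subtype.val : {v : V // v ∉ N} → V)).det) {w : V → ℝ} (hw : IsHarmonicOff c N w) :
    respMat c N *ᵥ (fun i => w i) = fun i : {v // v ∈ N} => -(netLap c *ᵥ w) i := by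
  set A := (netLap c).submatrix (Subtype.val : {v : V // v ∈ N} → V) Subtype.val
  set B := (netLap c).submatrix (Subtype.val : {v : V // v ∈ N} → V)
    (Subtype.val : {v : V // v ∉ N} → V)
  set C := (netLap c).submatrix (Subtype.val : {v : V // v ∉ N} → V) Subtype.val
  set f : {v // v ∈ N} → ℝ := fun i => w i
  set u : {v // v ∉ N} → ℝ := fun i => w i
  have hboundary : A *ᵥ f + B *ᵥ u = fun i : {v // v ∈ N} => (netLap c *ᵥ w) i :=
    (netLap c).submatrix_mulVec_add_submatrix_compl_mulVec _ N w
  have hinterior : C *ᵥ u = -(Bᵀ *ᵥ f) := by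
    rw [transpose_submatrix, netLap_transpose hsymm, eq_neg_iff_add_eq_zero, add_comm]
    exact isHarmonicOff_iff.1 hw
  have hu : u = -(C⁻¹ *ᵥ (Bᵀ *ᵥ f)) := by
    rw [← mulVec_neg, ← hinterior, mulVec_mulVec, nonsing_inv_mul _ hC, one_mulVec]
  calc respMat c N *ᵥ f = -(A *ᵥ f) + B *ᵥ (C⁻¹ *ᵥ (Bᵀ *ᵥ f)) := by
        simp only [respMat, add_mulVec, neg_mulVec, mulVec_mulVec, Matrix.mul_assoc, A, B, C]
    _ = -(A *ᵥ f + B *ᵥ u) := by rw [hu, mulVec_neg]; abel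
    _ = _ := by rw [hboundary]; rfl

theorem respMat_apply_of_isHarmonicOff (hsymm : ∀ v w, c v w = c w v) {N : Finset V}
    (hC : IsUnit ((netLap c).submatrix (Subtype.val : {v : V // v ∉ N} → V)
      (Subtype.val : {v : V // v ∉ N} → V)).det) {w : V → ℝ} (hw : IsHarmonicOff c N w)
    {j : {v // v ∈ N}} (hwj : (fun i : {v // v ∈ N} => w i) = Pi.single j 1)
    (i : {v // v ∈ N}) : respMat c N i j = -(netLap c *ᵥ w) i := by
  have := congrFun (respMat_mulVec_of_isHarmonicOff hsymm hC hw) i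
  rwa [hwj, mulVec_single_one] at this

variable (c) in
/-- The star-mesh transformation at `v₀`; at a vertex of degree three it is the Y-Δ
transformation. -/
noncomputable def starMesh (v₀ : V) (x y : {v // v ≠ v₀}) : ℝ :=
  if x = y then 0 else c x y + c v₀ x * c v₀ y / ∑ u, c v₀ u

section StarMesh

variable {v₀ : V}

theorem starMesh_self (x : {v // v ≠ v₀}) : starMesh c v₀ x x = 0 := if_pos rfl

theorem starMesh_symm (hsymm : ∀ v w, c v w = c w v) (x y : {v // v ≠ v₀}) :
    starMesh c v₀ x y = starMesh c v₀ y x := by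
  unfold starMesh
  simp only [hsymm x y, mul_comm (c v₀ x), eq_comm (a := x)]

theorem starMesh_nonneg (hnonneg : ∀ v w, 0 ≤ c v w) (x y : {v // v ≠ v₀}) :
    0 ≤ starMesh c v₀ x y := by
  unfold starMesh
  split_ifs
  · rfl
  · have := hnonneg x y; have := hnonneg v₀ x; have := hnonneg v₀ y
    have : 0 ≤ ∑ u, c v₀ u := sum_nonneg fun u _ => hnonneg v₀ u
    positivity

theorem starMesh_ne_zero_iff (hnonneg : ∀ v w, 0 ≤ c v w) (hdeg : 0 < ∑ u, c v₀ u)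
    {x y : {v // v ≠ v₀}} (hxy : x ≠ y) :
    starMesh c v₀ x y ≠ 0 ↔ c x y ≠ 0 ∨ c v₀ x ≠ 0 ∧ c v₀ y ≠ 0 := by
  have := hnonneg v₀ x; have := hnonneg v₀ y
  rw [starMesh, if_neg hxy, Ne, add_eq_zero_iff_of_nonneg (hnonneg x y) (by positivity),
    div_eq_zero_iff, mul_eq_zero]
  simp only [hdeg.ne', or_false]
  tauto

theorem starMesh_mul_sub (w : V → ℝ) (x y : {v // v ≠ v₀}) :
    starMesh c v₀ x y * (w x - w y) = (c x y + c v₀ x * c v₀ y / ∑ u, c v₀ u) * (w x - w y) := by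
  by_cases hxy : x = y
  · simp [hxy]
  · rw [starMesh, if_neg hxy]

theorem netLap_starMesh_mulVec (hsymm : ∀ v w, c v w = c w v) (hdiag : ∀ v, c v v = 0)
    (hdeg : ∑ u, c v₀ u ≠ 0) (w : V → ℝ) (x : {v // v ≠ v₀}) :
    (netLap (starMesh c v₀) *ᵥ fun y => w y) x
      = (netLap c *ᵥ w) x + c v₀ x * (netLap c *ᵥ w) v₀ / ∑ u, c v₀ u := by
  set σ := ∑ u, c v₀ u
  have hcurrent_v₀ : ∑ y, c v₀ y * (w x - w y) = (netLap c *ᵥ w) v₀ + σ * (w x - w v₀) := by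
    rw [netLap_mulVec_apply hdiag, sum_mul, ← sum_add_distrib]
    exact sum_congr rfl fun y _ => by ring
  calc (netLap (starMesh c v₀) *ᵥ fun y => w y) x
      = ∑ y : {v // v ≠ v₀}, (c x y + c v₀ x * c v₀ y / σ) * (w x - w y) := by
        rw [netLap_mulVec_apply starMesh_self]
        exact sum_congr rfl fun y _ => starMesh_mul_sub w x y
    _ = ∑ y, (c x y + c v₀ x * c v₀ y / σ) * (w x - w y) - c x v₀ * (w x - w v₀) := by
        rw [Fintype.sum_eq_add_sum_subtype_ne _ v₀, hdiag]
        ring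
    _ = (netLap c *ᵥ w) x + c v₀ x / σ * ∑ y, c v₀ y * (w x - w y)
          - c x v₀ * (w x - w v₀) := by
        rw [netLap_mulVec_apply hdiag, mul_sum, ← sum_add_distrib]
        congr 1
        exact sum_congr rfl fun y _ => by ring
    _ = _ := by
        rw [hcurrent_v₀, hsymm x v₀]
        field_simp
        ring

theorem connected_starMesh (hsymm : ∀ v w, c v w = c w v) (hnonneg : ∀ v w, 0 ≤ c v w)
    (hdiag : ∀ v, c v v = 0) (hconn : (SimpleGraph.fromRel fun v w : V => c v w ≠ 0).Connected)
    {u₀ : V} (hu₀ : 0 < c v₀ u₀) :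
    (SimpleGraph.fromRel fun x y : {v // v ≠ v₀} => starMesh c v₀ x y ≠ 0).Connected := by
  have hu₀v₀ : u₀ ≠ v₀ := by rintro rfl; exact hu₀.ne' (hdiag u₀)
  have hdeg : 0 < ∑ u, c v₀ u :=
    hu₀.trans_le (single_le_sum (fun u _ => hnonneg v₀ u) (mem_univ u₀))
  have hadj : ∀ {x y : {v // v ≠ v₀}}, x ≠ y → (c x y ≠ 0 ∨ c v₀ x ≠ 0 ∧ c v₀ y ≠ 0) →
      (SimpleGraph.fromRel fun x y : {v // v ≠ v₀} => starMesh c v₀ x y ≠ 0).Reachable x y :=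
    fun hxy h => SimpleGraph.Adj.reachable <| (SimpleGraph.fromRel_adj _ _ _).2
      ⟨hxy, Or.inl ((starMesh_ne_zero_iff hnonneg hdeg hxy).2 h)⟩
  have hstar : ∀ b (hb : b ≠ v₀), c v₀ b ≠ 0 →
      (SimpleGraph.fromRel fun x y : {v // v ≠ v₀} => starMesh c v₀ x y ≠ 0).Reachable
        ⟨u₀, hu₀v₀⟩ ⟨b, hb⟩ := fun b hb hb0 => by
    by_cases hbu₀ : b = u₀
    · subst hbu₀; rfl
    · exact hadj (by simpa [eq_comm] using hbu₀) (Or.inr ⟨hu₀.ne', hb0⟩)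
  let f : V → {v // v ≠ v₀} := fun v => if h : v = v₀ then ⟨u₀, hu₀v₀⟩ else ⟨v, h⟩
  have hf : ∀ a b, (SimpleGraph.fromRel fun v w : V => c v w ≠ 0).Adj a b →
      (SimpleGraph.fromRel fun x y : {v // v ≠ v₀} => starMesh c v₀ x y ≠ 0).Reachable
        (f a) (f b) := fun a b hab => by
    obtain ⟨hab, hcab⟩ := (SimpleGraph.fromRel_adj _ a b).1 hab
    replace hcab : c a b ≠ 0 := hcab.elim id (hsymm a b ▸ ·)
    by_cases ha : a = v₀
    · subst ha
      simpa [f, Ne.symm hab] using hstar b (Ne.symm hab) hcab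
    by_cases hb : b = v₀
    · subst hb
      simpa [f, ha] using (hstar a ha (hsymm a b ▸ hcab)).symm
    simpa [f, ha, hb] using hadj (x := ⟨a, ha⟩) (y := ⟨b, hb⟩) (by simpa using hab) (Or.inl hcab)
  refine (SimpleGraph.connected_iff _).2 ⟨fun x y => ?_, ⟨⟨u₀, hu₀v₀⟩⟩⟩
  simpa [f, x.2, y.2] using (hconn.preconnected x y).map_of_adj f hf

end StarMesh

end Network

section YDelta

variable {V : Type*} [DecidableEq V] {c : V → V → ℝ} {v₀ v₁ v₂ v₃ : V}

theorem yDelta_increment_self (h12 : v₁ ≠ v₂) (h13 : v₁ ≠ v₃) (h23 : v₂ ≠ v₃) (σ : ℝ) (a : V) :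
    (if ({a, a} : Finset V) = {v₁, v₂} then c v₀ v₁ * c v₀ v₂ / σ
      else if ({a, a} : Finset V) = {v₁, v₃} then c v₀ v₁ * c v₀ v₃ / σ
      else if ({a, a} : Finset V) = {v₂, v₃} then c v₀ v₂ * c v₀ v₃ / σ
      else 0) = 0 := by
  have hne : ∀ x y : V, x ≠ y → ({a, a} : Finset V) ≠ {x, y} := fun x y hxy h =>
    hxy <| by
      rw [Finset.pair_eq_singleton, eq_comm, Finset.eq_singleton_iff_unique_mem] at h
      exact (h.2 x (by simp)).trans (h.2 y (by simp)).symm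
  rw [if_neg (hne _ _ h12), if_neg (hne _ _ h13), if_neg (hne _ _ h23)]

theorem yDelta_increment_of_ne (h12 : v₁ ≠ v₂) (h13 : v₁ ≠ v₃) (h23 : v₂ ≠ v₃)
    (hnbr : ∀ u : V, c v₀ u ≠ 0 → u = v₁ ∨ u = v₂ ∨ u = v₃) (σ : ℝ) {a b : V} (hab : a ≠ b) :
    (if ({a, b} : Finset V) = {v₁, v₂} then c v₀ v₁ * c v₀ v₂ / σ
      else if ({a, b} : Finset V) = {v₁, v₃} then c v₀ v₁ * c v₀ v₃ / σ
      else if ({a, b} : Finset V) = {v₂, v₃} then c v₀ v₂ * c v₀ v₃ / σ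
      else 0) = c v₀ a * c v₀ b / σ := by
  by_cases ha : a = v₁ ∨ a = v₂ ∨ a = v₃
  · by_cases hb : b = v₁ ∨ b = v₂ ∨ b = v₃
    · rcases ha with rfl | rfl | rfl <;> rcases hb with rfl | rfl | rfl <;>
        first
        | exact absurd rfl hab
        | simp [← Finset.coe_inj, Set.pair_eq_pair_iff, h12, h13, h23, h12.symm, h13.symm,
            h23.symm, mul_comm]
    · have hb0 : c v₀ b = 0 := by_contra fun h => hb (hnbr b h)
      push Not at hb
      simp [← Finset.coe_inj, Set.pair_eq_pair_iff, hb, hb0]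
  · have ha0 : c v₀ a = 0 := by_contra fun h => ha (hnbr a h)
    push Not at ha
    simp [← Finset.coe_inj, Set.pair_eq_pair_iff, ha, ha0]

theorem yDelta_eq_starMesh [Fintype V] (hdiag : ∀ v, c v v = 0) (h12 : v₁ ≠ v₂)
    (h13 : v₁ ≠ v₃) (h23 : v₂ ≠ v₃) (hnbr : ∀ u : V, c v₀ u ≠ 0 → u = v₁ ∨ u = v₂ ∨ u = v₃) :
    (fun x y : {v // v ≠ v₀} => c x y +
      (if ({x.val, y.val} : Finset V) = {v₁, v₂} then
          c v₀ v₁ * c v₀ v₂ / (c v₀ v₁ + c v₀ v₂ + c v₀ v₃)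
        else if ({x.val, y.val} : Finset V) = {v₁, v₃} then
          c v₀ v₁ * c v₀ v₃ / (c v₀ v₁ + c v₀ v₂ + c v₀ v₃)
        else if ({x.val, y.val} : Finset V) = {v₂, v₃} then
          c v₀ v₂ * c v₀ v₃ / (c v₀ v₁ + c v₀ v₂ + c v₀ v₃)
        else 0)) = starMesh c v₀ := by
  funext x y
  rw [starMesh, Fintype.sum_eq_three_of_support_subset h12 h13 h23 hnbr]
  by_cases hxy : x = y
  · subst hxy
    rw [if_pos rfl, hdiag, yDelta_increment_self h12 h13 h23, add_zero]
  · rw [if_neg hxy, yDelta_increment_of_ne h12 h13 h23 hnbr _ (Subtype.val_injective.ne hxy)]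

end YDelta

theorem y_delta_preserves_response_general {V : Type*} [Fintype V] [DecidableEq V]
    (c : V → V → ℝ) (N : Finset V)
    (hsymm : ∀ v w, c v w = c w v)
    (hnonneg : ∀ v w, 0 ≤ c v w)
    (hdiag : ∀ v, c v v = 0)
    (hconn : (SimpleGraph.fromRel fun v w : V => c v w ≠ 0).Connected)
    (hN : N.Nonempty)
    (v₀ v₁ v₂ v₃ : V) (hv₀ : v₀ ∉ N)
    (h12 : v₁ ≠ v₂) (h13 : v₁ ≠ v₃) (h23 : v₂ ≠ v₃)
    (hc1 : 0 < c v₀ v₁) (hc2 : 0 < c v₀ v₂) (hc3 : 0 < c v₀ v₃)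
    (hnbr : ∀ u : V, c v₀ u ≠ 0 → u = v₁ ∨ u = v₂ ∨ u = v₃) :
    let σ : ℝ := c v₀ v₁ + c v₀ v₂ + c v₀ v₃
    let c' : {v : V // v ≠ v₀} → {v : V // v ≠ v₀} → ℝ := fun x y =>
      c x.val y.val +
        (if ({x.val, y.val} : Finset V) = {v₁, v₂} then c v₀ v₁ * c v₀ v₂ / σ
         else if ({x.val, y.val} : Finset V) = {v₁, v₃} then c v₀ v₁ * c v₀ v₃ / σ
         else if ({x.val, y.val} : Finset V) = {v₂, v₃} then c v₀ v₂ * c v₀ v₃ / σ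
         else 0)
    let N' : Finset {v : V // v ≠ v₀} := N.subtype (fun v => v ≠ v₀)
    (SimpleGraph.fromRel fun x y : {v : V // v ≠ v₀} => c' x y ≠ 0).Connected ∧
    ∀ i j : {v : V // v ∈ N},
      respMat c' N'
        ⟨⟨i.val, fun h => hv₀ (h ▸ i.property)⟩, Finset.mem_subtype.mpr i.property⟩
        ⟨⟨j.val, fun h => hv₀ (h ▸ j.property)⟩, Finset.mem_subtype.mpr j.property⟩
      = respMat c N i j := by
  intro σ c' N'
  have hc' : c' = starMesh c v₀ := yDelta_eq_starMesh hdiag h12 h13 h23 hnbr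
  have hdeg : ∑ u, c v₀ u ≠ 0 := by
    rw [Fintype.sum_eq_three_of_support_subset h12 h13 h23 hnbr]; positivity
  have hconn' := connected_starMesh hsymm hnonneg hdiag hconn hc1
  rw [hc']
  refine ⟨hconn', fun i j => ?_⟩
  have hC := isUnit_det_dirichletLap hsymm hnonneg hdiag hconn hN
  have hC' := isUnit_det_dirichletLap (starMesh_symm hsymm) (starMesh_nonneg hnonneg)
    starMesh_self hconn' (N := N')
    (hN.elim fun n hn => ⟨⟨n, fun h => hv₀ (h ▸ hn)⟩, mem_subtype.2 hn⟩)
  obtain ⟨w, hwN, hw⟩ := exists_isHarmonicOff_extension hC (Pi.single j 1)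
  have hcurrent : ∀ x, (netLap (starMesh c v₀) *ᵥ fun y => w y) x = (netLap c *ᵥ w) x := by
    intro x
    rw [netLap_starMesh_mulVec hsymm hdiag hdeg, hw v₀ hv₀, mul_zero, zero_div, add_zero]
  have hw' : IsHarmonicOff (starMesh c v₀) N' fun y => w y := fun x hx => by
    rw [hcurrent]; exact hw x (by simpa [N'] using hx)
  rw [respMat_apply_of_isHarmonicOff (starMesh_symm hsymm) hC' hw' ?_,
    respMat_apply_of_isHarmonicOff hsymm hC hw hwN, hcurrent]
  ext x
  have := congrFun hwN ⟨x.1.1, mem_subtype.1 x.2⟩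
  simp only [Pi.single_apply, Subtype.ext_iff] at this ⊢
  exact this

/-- The Y-Delta transformation preserves the response matrix: if the internal vertex
`v₀` has exactly the three distinct neighbors `v₁, v₂, v₃` with conductances
`cᵢ = c v₀ vᵢ`, then deleting `v₀` (and its edges) and increasing the conductance
between `vᵢ` and `vⱼ` by `cᵢcⱼ/(c₁+c₂+c₃)` yields a connected network with the same
response matrix on the node set `N`. -/
theorem y_delta_preserves_response {V : Type*} [Fintype V] [DecidableEq V]
    (c : V → V → ℝ) (N : Finset V)
    (hsymm : ∀ v w, c v w = c w v)
    (hnonneg : ∀ v w, 0 ≤ c v w)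
    (hdiag : ∀ v, c v v = 0)
    (hconn : (SimpleGraph.fromRel fun v w : V => c v w ≠ 0).Connected)
    (hN : N.Nonempty)
    (v₀ v₁ v₂ v₃ : V) (hv₀ : v₀ ∉ N)
    (h01 : v₀ ≠ v₁) (h02 : v₀ ≠ v₂) (h03 : v₀ ≠ v₃)
    (h12 : v₁ ≠ v₂) (h13 : v₁ ≠ v₃) (h23 : v₂ ≠ v₃)
    (hc1 : 0 < c v₀ v₁) (hc2 : 0 < c v₀ v₂) (hc3 : 0 < c v₀ v₃)
    (hnbr : ∀ u : V, c v₀ u ≠ 0 → u = v₁ ∨ u = v₂ ∨ u = v₃) :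
    let σ : ℝ := c v₀ v₁ + c v₀ v₂ + c v₀ v₃
    let c' : {v : V // v ≠ v₀} → {v : V // v ≠ v₀} → ℝ := fun x y =>
      c x.val y.val +
        (if ({x.val, y.val} : Finset V) = {v₁, v₂} then c v₀ v₁ * c v₀ v₂ / σ
         else if ({x.val, y.val} : Finset V) = {v₁, v₃} then c v₀ v₁ * c v₀ v₃ / σ
         else if ({x.val, y.val} : Finset V) = {v₂, v₃} then c v₀ v₂ * c v₀ v₃ / σ
         else 0)
    let N' : Finset {v : V // v ≠ v₀} := N.subtype (fun v => v ≠ v₀)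
    (SimpleGraph.fromRel fun x y : {v : V // v ≠ v₀} => c' x y ≠ 0).Connected ∧
    ∀ i j : {v : V // v ∈ N},
      respMat c' N'
        ⟨⟨i.val, fun h => hv₀ (h ▸ i.property)⟩, Finset.mem_subtype.mpr i.property⟩
        ⟨⟨j.val, fun h => hv₀ (h ▸ j.property)⟩, Finset.mem_subtype.mpr j.property⟩
      = respMat c N i j :=
  y_delta_preserves_response_general c N hsymm hnonneg hdiag hconn hN v₀ v₁ v₂ v₃ hv₀ h12 h13 h23
    hc1 hc2 hc3 hnbr
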